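/- The map Z(u¹,u²,u³,u⁴) = (cos u¹ cosh u³, sin u¹ cosh u³, u², sin u¹ sinh u³, -cos u¹ sinh u³, u⁴) into ℝ⁶ satisfies (x¹ + iy¹)² + (x² + iy²)² = 1 where x = (Z₁,Z₂,Z₃), y = (Z₄,Z₅,Z₆) (i.e. it lies on the complex cylinder), and the induced metric ⟨∂ᵢZ,∂ⱼZ⟩ with respect to the ℝ⁶ bilinear form of signature (+,+,+,-,-,-) equals (du¹)² + (du²)² - (du³)² - (du⁴)². -/

import Mathlib

open Real

/-- Parametrization of the complex cylinder `(Z¹)² + (Z²)² = 1` in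
`ℂ³ ≅ ℝ⁶` (`i`-splitting: `(x¹,x²,x³,y¹,y²,y³)`). -/
noncomputable def Zc (p : Fin 4 → ℝ) : Fin 6 → ℝ :=
  ![cos (p 0) * cosh (p 2), sin (p 0) * cosh (p 2), p 1,
    sin (p 0) * sinh (p 2), -(cos (p 0) * sinh (p 2)), p 3]

/-- The bilinear form of signature `(+,+,+,-,-,-)` on `ℝ⁶`. -/
def ip6 (a b : Fin 6 → ℝ) : ℝ :=
  a 0 * b 0 + a 1 * b 1 + a 2 * b 2 - a 3 * b 3 - a 4 * b 4 - a 5 * b 5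

/-- The tangent vector `∂ᵢZ`. -/
noncomputable def dZc (i : Fin 4) (p : Fin 4 → ℝ) : Fin 6 → ℝ :=
  fun k => fderiv ℝ (fun q => Zc q k) p (Pi.single i 1)

/-!
In complex terms `Z¹ = cos w` and `Z² = sin w` with `w = u¹ - i u³`, so `(Z¹)² + (Z²)² = 1`. For the
metric, `dZ¹ = -sin w dw`, `dZ² = cos w dw`, `dZ³ = du² + i du⁴`; the real part of the complex-bilinear
product is `Re (dw dw') + du² du²' - du⁴ du⁴'` and `Re (dw dw') = du¹ du¹' - du³ du³'`.
-/

theorem fderiv_apply_mul_apply {ι : Type*} [Fintype ι] {f g : ℝ → ℝ} {f' g' : ℝ}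
    {p : ι → ℝ} {a b : ι} (hf : HasDerivAt f f' (p a)) (hg : HasDerivAt g g' (p b))
    (v : ι → ℝ) :
    fderiv ℝ (fun q : ι → ℝ => f (q a) * g (q b)) p v = f' * g (p b) * v a + f (p a) * g' * v b := by
  have hfa := hf.comp_hasFDerivAt p (hasFDerivAt_apply (𝕜 := ℝ) (F' := fun _ => ℝ) a p)
  have hgb := hg.comp_hasFDerivAt p (hasFDerivAt_apply (𝕜 := ℝ) (F' := fun _ => ℝ) b p)
  rw [HasFDerivAt.fderiv (f := fun q : ι → ℝ => f (q a) * g (q b)) (hfa.mul hgb)]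
  simp only [add_apply, smul_apply, ContinuousLinearMap.proj_apply, smul_eq_mul, Function.comp_def]
  ring

noncomputable def tangentZc (p v : Fin 4 → ℝ) : Fin 6 → ℝ :=
  ![-sin (p 0) * cosh (p 2) * v 0 + cos (p 0) * sinh (p 2) * v 2,
    cos (p 0) * cosh (p 2) * v 0 + sin (p 0) * sinh (p 2) * v 2,
    v 1,
    cos (p 0) * sinh (p 2) * v 0 + sin (p 0) * cosh (p 2) * v 2,
    -(-sin (p 0) * sinh (p 2) * v 0 + cos (p 0) * cosh (p 2) * v 2),
    v 3]

theorem fderiv_Zc_apply (p v : Fin 4 → ℝ) (k : Fin 6) :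
    fderiv ℝ (fun q => Zc q k) p v = tangentZc p v k := by
  have coord (j : Fin 4) : fderiv ℝ (fun q : Fin 4 → ℝ => q j) p v = v j := by
    rw [(hasFDerivAt_apply (𝕜 := ℝ) j p).fderiv, ContinuousLinearMap.proj_apply]
  fin_cases k
  · exact fderiv_apply_mul_apply (hasDerivAt_cos _) (hasDerivAt_cosh _) v
  · exact fderiv_apply_mul_apply (hasDerivAt_sin _) (hasDerivAt_cosh _) v
  · exact coord 1
  · exact fderiv_apply_mul_apply (hasDerivAt_sin _) (hasDerivAt_sinh _) v
  · show fderiv ℝ (fun q => -(cos (q 0) * sinh (q 2))) p v = _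
    rw [fderiv_fun_neg]
    exact congrArg Neg.neg (fderiv_apply_mul_apply (hasDerivAt_cos _) (hasDerivAt_sinh _) v)
  · exact coord 3

theorem dZc_eq_tangentZc (i : Fin 4) (p : Fin 4 → ℝ) : dZc i p = tangentZc p (Pi.single i 1) :=
  funext fun k => fderiv_Zc_apply p _ k

theorem ip6_tangentZc (p v w : Fin 4 → ℝ) :
    ip6 (tangentZc p v) (tangentZc p w) = v 0 * w 0 + v 1 * w 1 - v 2 * w 2 - v 3 * w 3 := by
  simp only [ip6, tangentZc, Matrix.cons_val]
  linear_combination (cosh (p 2) ^ 2 - sinh (p 2) ^ 2) * (v 0 * w 0 - v 2 * w 2) *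
      sin_sq_add_cos_sq (p 0) + (v 0 * w 0 - v 2 * w 2) * cosh_sq_sub_sinh_sq (p 2)

theorem Zc_first_eq_cos (p : Fin 4 → ℝ) :
    (Zc p 0 : ℂ) + Complex.I * Zc p 3 = Complex.cos (p 0 - p 2 * Complex.I) := by
  simp only [Zc, Matrix.cons_val]
  push_cast
  rw [Complex.cos_sub, Complex.cos_mul_I, Complex.sin_mul_I]
  ring

theorem Zc_second_eq_sin (p : Fin 4 → ℝ) :
    (Zc p 1 : ℂ) + Complex.I * Zc p 4 = Complex.sin (p 0 - p 2 * Complex.I) := by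
  simp only [Zc, Matrix.cons_val]
  push_cast
  rw [Complex.sin_sub, Complex.cos_mul_I, Complex.sin_mul_I]
  ring

/-- The map `Z` lies on the complex cylinder: `(x¹+iy¹)² + (x²+iy²)² = 1`,
and the induced metric is `(du¹)² + (du²)² - (du³)² - (du⁴)²`. -/
theorem complex_cylinder_parametrization :
    ∀ p : Fin 4 → ℝ,
      ((Zc p 0 : ℂ) + Complex.I * Zc p 3) ^ 2
        + ((Zc p 1 : ℂ) + Complex.I * Zc p 4) ^ 2 = 1 ∧
      ∀ i j : Fin 4,
        ip6 (dZc i p) (dZc j p) =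
          Matrix.diagonal (![1, 1, -1, -1] : Fin 4 → ℝ) i j := by
  intro p
  refine ⟨?_, fun i j => ?_⟩
  · rw [Zc_first_eq_cos, Zc_second_eq_sin, Complex.cos_sq_add_sin_sq]
  · rw [dZc_eq_tangentZc, dZc_eq_tangentZc, ip6_tangentZc]
    fin_cases i <;> fin_cases j <;> simp [Matrix.diagonal]
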